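/- arXiv:1407.6385 — 4 statements merged into one kernel-verified Lean document; each statement's English description precedes it below -/
import Mathlib

section
/- (Exchange identity for Δ⁻¹.) Let f : ℤ → k and let G : ℤ → k be any function with Δ(G) = f (i.e. G(n+1) − G(n) = f(n) for all n). Then as linear operators on V: Δ⁻¹ ∘ M_f ∘ Δ⁻¹ = M_G ∘ Δ⁻¹ − Δ⁻¹ ∘ M_{Λ(G)}. -/
open Finset

namespace CdKP

variable {k : Type*} [Field k]

/-- Shift operator: `(Λ f) n = f (n+1)`. -/
def Lam (f : ℤ → k) : ℤ → k := fun n => f (n + 1)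

/-- Inverse shift operator: `(Λ⁻¹ f) n = f (n-1)`. -/
def LamInv (f : ℤ → k) : ℤ → k := fun n => f (n - 1)

/-- Difference operator `Δ = Λ - 1`. -/
def Dlt (f : ℤ → k) : ℤ → k := fun n => f (n + 1) - f n

/-- Formal adjoint difference operator `Δ* = Λ⁻¹ - 1`. -/
def DltStar (f : ℤ → k) : ℤ → k := fun n => f (n - 1) - f n

/-- Inverse of `Δ` on `V`: `(Δ⁻¹ f) n = -∑_{m ≥ n} f m`. -/
noncomputable def Dinv (f : ℤ → k) : ℤ → k := fun n => -∑ᶠ m ∈ Set.Ici n, f m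

/-- Membership in `V`: `f n = 0` for all sufficiently large `n`. -/
def InV (f : ℤ → k) : Prop := ∃ N : ℤ, ∀ n ≥ N, f n = 0

/-- Multiplication operator `M_g`: `(M_g f) n = g n * f n`. -/
def Mul (g f : ℤ → k) : ℤ → k := fun n => g n * f n

/-- Pointwise inverse of a function. -/
def pinv (r : ℤ → k) : ℤ → k := fun n => (r n)⁻¹

lemma sum_Ici_zero (h : ℤ → k) (N : ℤ) (hN : ∀ m ≥ N, h m = 0) {n : ℤ} (hn : N ≤ n) :
    ∑ᶠ m ∈ Set.Ici n, h m = 0 :=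
  finsum_mem_of_eqOn_zero fun m hm => hN m (hn.trans hm)

lemma sum_Ici_split (h : ℤ → k) (N : ℤ) (hN : ∀ m ≥ N, h m = 0) (n : ℤ) :
    ∑ᶠ m ∈ Set.Ici n, h m = h n + ∑ᶠ m ∈ Set.Ici (n + 1), h m := by
  have hins : Set.Ici n = insert n (Set.Ici (n + 1)) := by
    ext m; simp only [Set.mem_Ici, Set.mem_insert_iff]; omega
  have hfin : (Set.Ici (n + 1) ∩ Function.support h).Finite := by
    apply (Set.finite_Icc (n + 1) N).subset
    rintro m ⟨hm1, hm2⟩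
    refine ⟨hm1, ?_⟩
    by_contra hc
    exact hm2 (hN m (by omega))
  rw [hins, finsum_mem_insert' h (by simp) hfin]

/-- Exchange identity: if `Δ(G) = f` then on `V`,
`Δ⁻¹ ∘ M_f ∘ Δ⁻¹ = M_G ∘ Δ⁻¹ - Δ⁻¹ ∘ M_{Λ(G)}`. -/
theorem dinv_exchange {k : Type*} [Field k] (f G : ℤ → k)
    (hG : ∀ n : ℤ, G (n + 1) - G n = f n)
    (g : ℤ → k) (hg : InV g) (n : ℤ) :
    Dinv (Mul f (Dinv g)) n = G n * Dinv g n - Dinv (Mul (Lam G) g) n := by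
  obtain ⟨N, hN⟩ := hg
  have hS0 : ∀ m ≥ N, Dinv g m = 0 := fun m hm => by
    unfold Dinv; rw [sum_Ici_zero g N hN hm, neg_zero]
  have h1 : ∀ m ≥ N, Mul f (Dinv g) m = 0 := fun m hm => by
    simp [Mul, hS0 m hm]
  have h2 : ∀ m ≥ N, Mul (Lam G) g m = 0 := fun m hm => by
    simp [Mul, Lam, hN m hm]
  have triv : ∀ m ≥ N, Dinv (Mul f (Dinv g)) m
      = G m * Dinv g m - Dinv (Mul (Lam G) g) m := by
    intro m hm
    have d1 : Dinv (Mul f (Dinv g)) m = 0 := by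
      rw [show Dinv (Mul f (Dinv g)) m = -∑ᶠ m' ∈ Set.Ici m, Mul f (Dinv g) m' from rfl,
        sum_Ici_zero _ N h1 hm, neg_zero]
    have d2 : Dinv (Mul (Lam G) g) m = 0 := by
      rw [show Dinv (Mul (Lam G) g) m = -∑ᶠ m' ∈ Set.Ici m, Mul (Lam G) g m' from rfl,
        sum_Ici_zero _ N h2 hm, neg_zero]
    rw [d1, d2, hS0 m hm]
    ring
  have key : ∀ j : ℕ, Dinv (Mul f (Dinv g)) (N - j)
      = G (N - j) * Dinv g (N - j) - Dinv (Mul (Lam G) g) (N - j) := by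
    intro j
    induction j with
    | zero => simpa using triv N le_rfl
    | succ j ih =>
      set m : ℤ := N - j with hmdef
      have hrw : (N : ℤ) - (j + 1 : ℕ) = m - 1 := by push_cast [hmdef]; ring
      rw [hrw]
      have e1 := sum_Ici_split (Mul f (Dinv g)) N h1 (m - 1)
      have e2 := sum_Ici_split (Mul (Lam G) g) N h2 (m - 1)
      have e3 := sum_Ici_split g N hN (m - 1)
      rw [sub_add_cancel] at e1 e2 e3
      have hGf := hG (m - 1)
      rw [sub_add_cancel] at hGf
      simp only [Dinv, Mul, Lam, sub_add_cancel] at ih e1 e2 e3 ⊢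
      rw [e1, e2]
      have hS : (∑ᶠ x ∈ Set.Ici (m - 1), g x) = g (m - 1) + ∑ᶠ x ∈ Set.Ici m, g x := e3
      rw [hS]
      linear_combination ih - (g (m - 1) + ∑ᶠ x ∈ Set.Ici m, g x) * hGf
  rcases le_or_gt N n with h | h
  · exact triv n h
  · have : n = N - ((N - n).toNat : ℤ) := by omega
    rw [this]; exact key _

end CdKP
end

section
/- (Negative part of B·qΔ⁻¹r.) Let B = ∑_{j=0}^{d} M_{a_j} ∘ Δ^j be a difference operator and q, r : ℤ → k functions. Write B(q) := ∑_{j=0}^{d} a_j · Δ^j(q) for the pointwise application of B to q. Then there exists a difference operator P such that, as linear operators on V: B ∘ M_q ∘ Δ⁻¹ ∘ M_r = P + M_{B(q)} ∘ Δ⁻¹ ∘ M_r. -/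
open Finset

namespace CdKP

variable {k : Type*} [Field k]

/-- A difference operator: a finite sum `∑_{j=0}^{d} M_{a_j} ∘ Δ^j`. -/
def IsDiffOp (P : (ℤ → k) → ℤ → k) : Prop :=
  ∃ (d : ℕ) (a : ℕ → ℤ → k),
    ∀ (f : ℤ → k) (n : ℤ), P f n = ∑ j ∈ Finset.range (d + 1), a j n * Dlt^[j] f n


lemma finsum_Ici_eq {h : ℤ → k} {N : ℤ} (hN : ∀ m ≥ N, h m = 0) (n : ℤ) :
    ∑ᶠ m ∈ Set.Ici n, h m = ∑ m ∈ Finset.Ico n N, h m := by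
  apply finsum_mem_eq_sum_of_inter_support_eq
  ext m
  simp only [Set.mem_inter_iff, Set.mem_Ici, Function.mem_support, Finset.coe_Ico,
    Set.mem_Ico]
  constructor
  · rintro ⟨h1, h2⟩
    refine ⟨⟨h1, ?_⟩, h2⟩
    by_contra hc
    exact h2 (hN m (by omega))
  · rintro ⟨⟨h1, _⟩, h2⟩
    exact ⟨h1, h2⟩

lemma dlt_dinv {h : ℤ → k} (hh : InV h) (n : ℤ) : Dlt (Dinv h) n = h n := by
  obtain ⟨N, hN⟩ := hh
  simp only [Dlt, Dinv, finsum_Ici_eq hN]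
  rcases lt_or_ge n N with hn | hn
  · have : Finset.Ico n N = insert n (Finset.Ico (n + 1) N) := by
      ext m; simp only [Finset.mem_Ico, Finset.mem_insert]; omega
    rw [this, Finset.sum_insert (by simp)]
    ring
  · have h1 : Finset.Ico n N = ∅ := by
      ext m; simp only [Finset.mem_Ico, Finset.notMem_empty, iff_false]; omega
    have h2 : Finset.Ico (n + 1) N = ∅ := by
      ext m; simp only [Finset.mem_Ico, Finset.notMem_empty, iff_false]; omega
    rw [h1, h2, hN n hn]
    simp

lemma sum_extend {D d1 : ℕ} (hD : d1 ≤ D) (b : ℕ → ℤ → k) (f : ℤ → k) (n : ℤ) :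
    ∑ j ∈ Finset.range (D + 1), (if j ≤ d1 then b j n else 0) * Dlt^[j] f n =
      ∑ j ∈ Finset.range (d1 + 1), b j n * Dlt^[j] f n := by
  rw [← Finset.sum_subset (Finset.range_subset_range.2 (by omega : d1 + 1 ≤ D + 1))]
  · apply Finset.sum_congr rfl
    intro j hj
    rw [if_pos (Nat.lt_succ_iff.mp (Finset.mem_range.mp hj))]
  · intro j _ hj
    rw [if_neg (fun h => hj (Finset.mem_range.mpr (by omega)))]
    ring

lemma isDiffOp_zero : IsDiffOp (fun (_ : ℤ → k) (_ : ℤ) => (0 : k)) :=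
  ⟨0, fun _ _ => 0, by simp⟩

lemma isDiffOp_mul (b : ℤ → k) : IsDiffOp (fun (f : ℤ → k) (n : ℤ) => b n * f n) :=
  ⟨0, fun _ => b, by simp⟩

lemma isDiffOp_add {P Q : (ℤ → k) → ℤ → k} (hP : IsDiffOp P) (hQ : IsDiffOp Q) :
    IsDiffOp (fun f n => P f n + Q f n) := by
  obtain ⟨d1, a1, h1⟩ := hP
  obtain ⟨d2, a2, h2⟩ := hQ
  refine ⟨max d1 d2, fun j n => (if j ≤ d1 then a1 j n else 0) +
    (if j ≤ d2 then a2 j n else 0), fun f n => ?_⟩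
  show P f n + Q f n = _
  simp only [add_mul, Finset.sum_add_distrib]
  rw [sum_extend (le_max_left d1 d2), sum_extend (le_max_right d1 d2), h1, h2]

lemma isDiffOp_smul (c : ℤ → k) {P : (ℤ → k) → ℤ → k} (hP : IsDiffOp P) :
    IsDiffOp (fun f n => c n * P f n) := by
  obtain ⟨d1, a1, h1⟩ := hP
  refine ⟨d1, fun j n => c n * a1 j n, fun f n => ?_⟩
  show c n * P f n = _
  rw [h1, Finset.mul_sum]
  exact Finset.sum_congr rfl fun j _ => by ring

lemma isDiffOp_dlt {P : (ℤ → k) → ℤ → k} (hP : IsDiffOp P) :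
    IsDiffOp (fun f => Dlt (P f)) := by
  obtain ⟨d1, a1, h1⟩ := hP
  refine ⟨d1 + 1, fun j n => (if j ≤ d1 then a1 j (n + 1) - a1 j n else 0) +
    (if 1 ≤ j then a1 (j - 1) (n + 1) else 0), fun f n => ?_⟩
  show Dlt (P f) n = _
  have key : Dlt (P f) n = ∑ j ∈ Finset.range (d1 + 1),
      ((a1 j (n + 1) - a1 j n) * Dlt^[j] f n + a1 j (n + 1) * Dlt^[j + 1] f n) := by
    simp only [Dlt, h1, ← Finset.sum_sub_distrib]
    apply Finset.sum_congr rfl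
    intro j _
    rw [Function.iterate_succ_apply']
    simp only [Dlt]
    ring
  rw [key, Finset.sum_add_distrib]
  simp only [add_mul, Finset.sum_add_distrib]
  congr 1
  · exact (sum_extend (by omega : d1 ≤ d1 + 1) (fun j m => a1 j (m + 1) - a1 j m) f n).symm
  · conv_rhs => rw [Finset.sum_range_succ']
    have h0 : (if 1 ≤ (0 : ℕ) then a1 (0 - 1) (n + 1) else 0) * Dlt^[0] f n = 0 := by simp
    rw [h0, add_zero]
    apply Finset.sum_congr rfl
    intro j _
    simp

/-- The correction operator in the j-fold difference Leibniz expansion. -/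
def Eop (q r : ℤ → k) : ℕ → (ℤ → k) → ℤ → k
  | 0 => fun _ _ => 0
  | j + 1 => fun f n => Dlt (Eop q r j f) n + (Dlt^[j] q (n + 1) * r n) * f n

lemma isDiffOp_Eop (q r : ℤ → k) (j : ℕ) : IsDiffOp (Eop q r j) := by
  induction j with
  | zero => exact isDiffOp_zero
  | succ j ih =>
    exact isDiffOp_add (isDiffOp_dlt ih) (isDiffOp_mul (fun n => Dlt^[j] q (n + 1) * r n))

lemma Eop_spec (q r : ℤ → k) (j : ℕ) (f : ℤ → k) (hf : InV f) (n : ℤ) :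
    Dlt^[j] (Mul q (Dinv (Mul r f))) n =
      Dlt^[j] q n * Dinv (Mul r f) n + Eop q r j f n := by
  induction j generalizing n with
  | zero => simp [Eop, Mul]
  | succ j ih =>
    have hrf : InV (Mul r f) := by
      obtain ⟨N, hN⟩ := hf
      exact ⟨N, fun m hm => by simp [Mul, hN m hm]⟩
    rw [Function.iterate_succ_apply', Function.iterate_succ_apply']
    simp only [Dlt, Eop]
    rw [ih, ih]
    have key := dlt_dinv hrf n
    simp only [Dlt, Mul] at key
    have hG : Dinv (Mul r f) (n + 1) = Dinv (Mul r f) n + (r n * f n) := by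
      linear_combination key
    rw [hG]
    ring


/-- Negative part of `B ∘ M_q ∘ Δ⁻¹ ∘ M_r`: there is a difference operator `P` with
`B ∘ M_q ∘ Δ⁻¹ ∘ M_r = P + M_{B(q)} ∘ Δ⁻¹ ∘ M_r` on `V`. -/
theorem diffOp_mul_dinv {k : Type*} [Field k] (d : ℕ) (a : ℕ → ℤ → k) (q r : ℤ → k) :
    ∃ P : (ℤ → k) → ℤ → k, IsDiffOp P ∧
      ∀ f : ℤ → k, InV f → ∀ n : ℤ,
        (∑ j ∈ Finset.range (d + 1), a j n * Dlt^[j] (Mul q (Dinv (Mul r f))) n) =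
          P f n + (∑ j ∈ Finset.range (d + 1), a j n * Dlt^[j] q n) * Dinv (Mul r f) n := by
  refine ⟨fun f n => ∑ j ∈ Finset.range (d + 1), a j n * Eop q r j f n, ?_, ?_⟩
  · have : ∀ m : ℕ, IsDiffOp (fun (f : ℤ → k) (n : ℤ) =>
        ∑ j ∈ Finset.range m, a j n * Eop q r j f n) := by
      intro m
      induction m with
      | zero => simpa using isDiffOp_zero
      | succ m ih =>
        obtain ⟨dd, aa, hh⟩ := isDiffOp_add ih (isDiffOp_smul (a m) (isDiffOp_Eop q r m))
        refine ⟨dd, aa, fun f n => ?_⟩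
        show ∑ j ∈ Finset.range (m + 1), a j n * Eop q r j f n = _
        rw [Finset.sum_range_succ]
        exact hh f n
    exact this (d + 1)
  · intro f hf n
    rw [Finset.sum_mul, ← Finset.sum_add_distrib]
    apply Finset.sum_congr rfl
    intro j _
    rw [Eop_spec q r j f hf n]
    ring

end CdKP
end

section
/- (Negative part of qΔ⁻¹r·B.) Let B = ∑_{j=0}^{d} M_{a_j} ∘ Δ^j be a difference operator and q, r : ℤ → k functions. Write B*(r) := ∑_{j=0}^{d} (Δ*)^j(a_j · r) for the pointwise application of the formal adjoint B* = ∑_j (Δ*)^j ∘ M_{a_j} to r, where Δ* = Λ⁻¹ − 1. Then there exists a difference operator P such that, as linear operators on V: M_q ∘ Δ⁻¹ ∘ M_r ∘ B = P + M_q ∘ Δ⁻¹ ∘ M_{B*(r)}. -/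
open Finset

namespace CdKP

variable {k : Type*} [Field k]

/-!
Summation by parts: the discrete product rule `g · Δf = (Δ*g) · f + Δ((Λ⁻¹g) · f)` together with
`Δ⁻¹ ∘ Δ = 1` on `V` gives `Δ⁻¹ ∘ M_g ∘ Δ = Δ⁻¹ ∘ M_{Δ*g} + M_{Λ⁻¹g}` on `V`. Iterating,
`Δ⁻¹ ∘ M_g ∘ Δʲ` equals `Δ⁻¹ ∘ M_{(Δ*)ʲg}` plus a difference operator of order `< j`; summing
over the terms `M_{a_j r} ∘ Δʲ` of `M_r ∘ B` and composing with `M_q` gives the claim.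
-/

namespace InV

variable {f : ℤ → k}

lemma add {g : ℤ → k} (hf : InV f) (hg : InV g) : InV (f + g) := by
  obtain ⟨N₁, hN₁⟩ := hf
  obtain ⟨N₂, hN₂⟩ := hg
  exact ⟨max N₁ N₂, fun n hn => by
    simp [hN₁ n (le_of_max_le_left hn), hN₂ n (le_of_max_le_right hn)]⟩

lemma finset_sum {ι : Type*} (s : Finset ι) {F : ι → ℤ → k} (hF : ∀ j ∈ s, InV (F j)) :
    InV (∑ j ∈ s, F j) := by
  classical
  induction s using Finset.induction_on with
  | empty => exact ⟨0, fun _ _ => by simp⟩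
  | insert j s hj ih =>
    rw [sum_insert hj]
    exact (hF j (mem_insert_self j s)).add (ih fun i hi => hF i (mem_insert_of_mem hi))

lemma mul (g : ℤ → k) (hf : InV f) : InV (Mul g f) := by
  obtain ⟨N, hN⟩ := hf
  exact ⟨N, fun n hn => by simp [Mul, hN n hn]⟩

lemma dlt (hf : InV f) : InV (Dlt f) := by
  obtain ⟨N, hN⟩ := hf
  exact ⟨N, fun n hn => by simp [Dlt, hN n hn, hN (n + 1) (by omega)]⟩

lemma dlt_iterate (hf : InV f) (j : ℕ) : InV (Dlt^[j] f) := by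
  induction j with
  | zero => exact hf
  | succ j ih => rw [Function.iterate_succ_apply']; exact ih.dlt

lemma finite_Ici_inter_support (hf : InV f) (n : ℤ) :
    (Set.Ici n ∩ Function.support f).Finite := by
  obtain ⟨N, hN⟩ := hf
  refine (Set.finite_Ico n N).subset fun m ⟨hnm, hm⟩ => ⟨hnm, ?_⟩
  by_contra! hNm
  exact hm (hN m hNm)

end InV

lemma dinv_add {f g : ℤ → k} (hf : InV f) (hg : InV g) (n : ℤ) :
    Dinv (f + g) n = Dinv f n + Dinv g n := by
  simp only [Dinv, Pi.add_apply,
    finsum_mem_add_distrib' (hf.finite_Ici_inter_support n) (hg.finite_Ici_inter_support n)]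
  ring

lemma dinv_finset_sum {ι : Type*} (s : Finset ι) {F : ι → ℤ → k} (hF : ∀ j ∈ s, InV (F j))
    (n : ℤ) : Dinv (∑ j ∈ s, F j) n = ∑ j ∈ s, Dinv (F j) n := by
  classical
  induction s using Finset.induction_on with
  | empty => simp [Dinv]
  | insert j s hj ih =>
    have hs : ∀ i ∈ s, InV (F i) := fun i hi => hF i (mem_insert_of_mem hi)
    rw [sum_insert hj, sum_insert hj, dinv_add (hF j (mem_insert_self j s))
      (InV.finset_sum s hs), ih hs]

lemma dinv_eq_neg_add_dinv_add_one {f : ℤ → k} (hf : InV f) (n : ℤ) :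
    Dinv f n = -f n + Dinv f (n + 1) := by
  rw [Dinv, Dinv, Set.Ici_add_one_eq_Ioi, ← Set.Ioi_insert,
    finsum_mem_insert' f Set.self_notMem_Ioi ((hf.finite_Ici_inter_support n).subset
      (Set.inter_subset_inter_left _ Set.Ioi_subset_Ici_self))]
  ring

lemma dinv_eq_zero {f : ℤ → k} {N : ℤ} (hN : ∀ m ≥ N, f m = 0) {n : ℤ} (hn : N ≤ n) :
    Dinv f n = 0 := by
  simp only [Dinv, neg_eq_zero]
  exact finsum_mem_eq_zero_of_forall_eq_zero fun m hm => hN m (hn.trans hm)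

lemma dinv_dlt {f : ℤ → k} (hf : InV f) (n : ℤ) : Dinv (Dlt f) n = f n := by
  obtain ⟨N, hN⟩ := id hf
  have hΔN : ∀ m ≥ N, Dlt f m = 0 := fun m hm => by
    simp [Dlt, hN m hm, hN (m + 1) (by omega)]
  rcases le_total N n with hNn | hnN
  · rw [dinv_eq_zero hΔN hNn, hN n hNn]
  induction n, hnN using Int.leInductionDown with
  | base => rw [dinv_eq_zero hΔN le_rfl, hN N le_rfl]
  | pred n _ ih =>
    rw [dinv_eq_neg_add_dinv_add_one hf.dlt, sub_add_cancel, ih, Dlt, sub_add_cancel]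
    ring

lemma mul_dlt (g f : ℤ → k) :
    Mul g (Dlt f) = Mul (DltStar g) f + Dlt (Mul (LamInv g) f) := by
  ext n
  simp only [Mul, Dlt, DltStar, LamInv, Pi.add_apply, add_sub_cancel_right]
  ring

lemma dinv_mul_dlt (g : ℤ → k) {f : ℤ → k} (hf : InV f) (n : ℤ) :
    Dinv (Mul g (Dlt f)) n = Dinv (Mul (DltStar g) f) n + g (n - 1) * f n := by
  rw [mul_dlt, dinv_add (hf.mul _) (hf.mul _).dlt, dinv_dlt (hf.mul _)]
  rfl

lemma dinv_mul_dlt_iterate (g : ℤ → k) {f : ℤ → k} (hf : InV f) (j : ℕ) (n : ℤ) :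
    Dinv (Mul g (Dlt^[j] f)) n = Dinv (Mul (DltStar^[j] g) f) n
      + ∑ i ∈ range j, DltStar^[i] g (n - 1) * Dlt^[j - 1 - i] f n := by
  induction j generalizing g with
  | zero => simp
  | succ j ih =>
    rw [Function.iterate_succ_apply', dinv_mul_dlt g (hf.dlt_iterate j), ih,
      Function.iterate_succ_apply, sum_range_succ' _ j]
    simp only [Function.iterate_succ_apply, Function.iterate_zero_apply, Nat.add_sub_cancel,
      Nat.sub_zero, Nat.sub_sub, Nat.add_comm 1]
    ring

lemma isDiffOp_mul_dlt_iterate (g : ℤ → k) (j : ℕ) :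
    IsDiffOp fun f n => g n * Dlt^[j] f n :=
  ⟨j, fun i n => if i = j then g n else 0, fun f n => by simp⟩

lemma sum_range_succ_ite_le {M : Type*} [AddCommMonoid M] {d D : ℕ} (h : d ≤ D) (F : ℕ → M) :
    ∑ j ∈ range (D + 1), (if j ≤ d then F j else 0) = ∑ j ∈ range (d + 1), F j := by
  rw [← sum_filter]
  congr 1
  ext j
  simp only [mem_filter, mem_range]
  omega

namespace IsDiffOp

variable {P Q : (ℤ → k) → ℤ → k}

lemma add (hP : IsDiffOp P) (hQ : IsDiffOp Q) : IsDiffOp fun f n => P f n + Q f n := by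
  obtain ⟨d₁, a₁, hP⟩ := hP
  obtain ⟨d₂, a₂, hQ⟩ := hQ
  refine ⟨max d₁ d₂,
    fun j n => (if j ≤ d₁ then a₁ j n else 0) + (if j ≤ d₂ then a₂ j n else 0), fun f n => ?_⟩
  simp only [add_mul, sum_add_distrib, ite_mul, zero_mul, sum_range_succ_ite_le (le_max_left d₁ d₂),
    sum_range_succ_ite_le (le_max_right d₁ d₂), hP, hQ]

lemma finset_sum {ι : Type*} (s : Finset ι) {P : ι → (ℤ → k) → ℤ → k}
    (hP : ∀ i ∈ s, IsDiffOp (P i)) : IsDiffOp fun f n => ∑ i ∈ s, P i f n := by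
  classical
  induction s using Finset.induction_on with
  | empty => exact ⟨0, 0, fun _ _ => by simp⟩
  | insert i s hi ih =>
    simp only [sum_insert hi]
    exact (hP i (mem_insert_self i s)).add (ih fun j hj => hP j (mem_insert_of_mem hj))

lemma mul_left (g : ℤ → k) (hP : IsDiffOp P) : IsDiffOp fun f n => g n * P f n := by
  obtain ⟨d, a, hP⟩ := hP
  exact ⟨d, fun j n => g n * a j n, fun f n => by simp only [hP, mul_sum, mul_assoc]⟩

end IsDiffOp

/-- Negative part of `M_q ∘ Δ⁻¹ ∘ M_r ∘ B`: there is a difference operator `P` with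
`M_q ∘ Δ⁻¹ ∘ M_r ∘ B = P + M_q ∘ Δ⁻¹ ∘ M_{B*(r)}` on `V`,
where `B*(r) = ∑_j (Δ*)^j (a_j · r)`. -/
theorem dinv_mul_diffOp {k : Type*} [Field k] (d : ℕ) (a : ℕ → ℤ → k) (q r : ℤ → k) :
    ∃ P : (ℤ → k) → ℤ → k, IsDiffOp P ∧
      ∀ f : ℤ → k, InV f → ∀ n : ℤ,
        Mul q (Dinv (Mul r
            (fun m => ∑ j ∈ Finset.range (d + 1), a j m * Dlt^[j] f m))) n =
          P f n +
            q n * Dinv (Mul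
              (fun m => ∑ j ∈ Finset.range (d + 1), DltStar^[j] (Mul (a j) r) m) f) n := by
  refine ⟨fun f n => q n * ∑ j ∈ range (d + 1), ∑ i ∈ range j,
      DltStar^[i] (Mul (a j) r) (n - 1) * Dlt^[j - 1 - i] f n,
    (IsDiffOp.finset_sum _ fun j _ => IsDiffOp.finset_sum _ fun i _ =>
      isDiffOp_mul_dlt_iterate _ _).mul_left q, fun f hf n => ?_⟩
  have hB : Mul r (fun m => ∑ j ∈ range (d + 1), a j m * Dlt^[j] f m) =
      ∑ j ∈ range (d + 1), Mul (Mul (a j) r) (Dlt^[j] f) := by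
    ext m
    simp only [Mul, mul_sum, Finset.sum_apply]
    exact sum_congr rfl fun j _ => by ring
  have hBstar : Mul (fun m => ∑ j ∈ range (d + 1), DltStar^[j] (Mul (a j) r) m) f =
      ∑ j ∈ range (d + 1), Mul (DltStar^[j] (Mul (a j) r)) f := by
    ext m
    simp only [Mul, sum_mul, Finset.sum_apply]
  rw [Mul, hB, hBstar, dinv_finset_sum _ fun j _ => (hf.dlt_iterate j).mul _,
    dinv_finset_sum _ fun j _ => hf.mul _]
  simp only [dinv_mul_dlt_iterate _ hf, sum_add_distrib]
  ring

end CdKP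
end

section
/- (Lemma on conjugation of MΔ⁻¹N by T_D(q), identity (tdMN).) Let q : ℤ → k be nowhere vanishing, M, N : ℤ → k functions, and let G : ℤ → k be any function with Δ(G) = N·q (pointwise). Set c := Λ(q)·Δ(q⁻¹·M·G), M̃ := Λ(q)·Δ(q⁻¹·M), and Ñ := −Λ(G·q⁻¹), all defined pointwise. Then as linear operators on V: T_D(q) ∘ M_M ∘ Δ⁻¹ ∘ M_N ∘ T_D(q)⁻¹ = M_c ∘ Δ⁻¹ ∘ M_{Λ(q⁻¹)} + M_{M̃} ∘ Δ⁻¹ ∘ M_{Ñ}. (Here M̃ realizes T_D(q)(M), Ñ realizes T_D(q)^{*−1}(N), and c realizes T_D(q)(MΔ⁻¹N)(q) of the formal pseudo-difference calculus; the identity holds for every choice of the antiderivative G.) -/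
open Finset

namespace CdKP

variable {k : Type*} [Field k]

/-- Difference-type gauge transformation operator `T_D(q) = M_{Λ(q)} ∘ Δ ∘ M_{q⁻¹}`. -/
def TD (q f : ℤ → k) : ℤ → k := Mul (Lam q) (Dlt (Mul (pinv q) f))

/-- The inverse of `T_D(q)`: `M_q ∘ Δ⁻¹ ∘ M_{Λ(q⁻¹)}`. -/
noncomputable def TDinv (q f : ℤ → k) : ℤ → k := Mul q (Dinv (Mul (Lam (pinv q)) f))

lemma supp_fin (g : ℤ → k) (N : ℤ) (hg : ∀ m ≥ N, g m = 0) (n : ℤ) :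
    (Set.Ici n ∩ Function.support g).Finite := by
  apply (Set.finite_Icc n N).subset
  rintro m ⟨hm, hm'⟩
  simp only [Function.mem_support] at hm'
  simp only [Set.mem_Ici] at hm
  refine ⟨hm, ?_⟩
  by_contra h
  exact hm' (hg m (by omega))

lemma Dinv_succ (g : ℤ → k) (N : ℤ) (hg : ∀ m ≥ N, g m = 0) (n : ℤ) :
    Dinv g (n + 1) = Dinv g n + g n := by
  have hset : Set.Ici n = insert n (Set.Ici (n + 1)) := by
    ext m; simp [Set.mem_insert_iff]; omega
  have h1 : ∑ᶠ m ∈ Set.Ici n, g m = g n + ∑ᶠ m ∈ Set.Ici (n + 1), g m := by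
    rw [hset]
    exact finsum_mem_insert' g (by simp) (supp_fin g N hg (n + 1))
  simp only [Dinv, h1]
  ring

lemma Dinv_vanish (g : ℤ → k) (N : ℤ) (hg : ∀ m ≥ N, g m = 0) :
    ∀ n ≥ N, Dinv g n = 0 := by
  intro n hn
  simp only [Dinv]
  rw [finsum_mem_of_eqOn_zero, neg_zero]
  intro m hm
  exact hg m (le_trans hn hm)

lemma eq_of_dlt_eq (A B : ℤ → k) (N : ℤ) (hA : ∀ n ≥ N, A n = 0) (hB : ∀ n ≥ N, B n = 0)
    (h : ∀ n, A (n + 1) - A n = B (n + 1) - B n) : A = B := by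
  have key : ∀ j : ℕ, ∀ n : ℤ, N ≤ n + j → A n = B n := by
    intro j
    induction j with
    | zero => intro n hn; simp at hn; rw [hA n hn, hB n hn]
    | succ j ih =>
      intro n hn
      by_cases hc : N ≤ n + j
      · exact ih n hc
      · have h1 : A (n + 1) = B (n + 1) := ih (n + 1) (by push_cast at hn ⊢; omega)
        have := h n
        linear_combination h1 - this
  funext n
  exact key (N - n).toNat n (by omega)

/-- Identity (tdMN): on `V`, for any antiderivative `G` of `N·q`,
`T_D(q) ∘ M_M ∘ Δ⁻¹ ∘ M_N ∘ T_D(q)⁻¹ = M_c ∘ Δ⁻¹ ∘ M_{Λ(q⁻¹)} + M_M̃ ∘ Δ⁻¹ ∘ M_Ñ`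
with `c = Λ(q)·Δ(q⁻¹·M·G)`, `M̃ = Λ(q)·Δ(q⁻¹·M)`, `Ñ = -Λ(G·q⁻¹)`. -/
theorem TD_conj_MdinvN {k : Type*} [Field k] (q : ℤ → k) (hq : ∀ n, q n ≠ 0)
    (M N G : ℤ → k) (hG : ∀ n : ℤ, Dlt G n = N n * q n)
    (f : ℤ → k) (hf : InV f) :
    TD q (Mul M (Dinv (Mul N (TDinv q f)))) =
      Mul (fun n => Lam q n * Dlt (fun m => (q m)⁻¹ * M m * G m) n)
          (Dinv (Mul (Lam (pinv q)) f))
        +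
      Mul (fun n => Lam q n * Dlt (fun m => (q m)⁻¹ * M m) n)
          (Dinv (Mul (fun n => -(Lam (fun m => G m * (q m)⁻¹) n)) f)) := by

  obtain ⟨N₀, hN₀⟩ := hf
  set g₁ : ℤ → k := Mul (Lam (pinv q)) f with hg₁def
  have hg₁ : ∀ m ≥ N₀, g₁ m = 0 := by
    intro m hm; simp [hg₁def, Mul, hN₀ m hm]
  set F : ℤ → k := Dinv g₁ with hFdef
  have hF1 : ∀ n, F (n + 1) = F n + g₁ n := Dinv_succ g₁ N₀ hg₁
  have hFv : ∀ n ≥ N₀, F n = 0 := Dinv_vanish g₁ N₀ hg₁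
  set g₂ : ℤ → k := Mul N (TDinv q f) with hg₂def
  have hg₂eq : ∀ n, g₂ n = N n * (q n * F n) := by
    intro n; simp [hg₂def, Mul, TDinv, hFdef, hg₁def]
  have hg₂ : ∀ m ≥ N₀, g₂ m = 0 := by
    intro m hm; rw [hg₂eq, hFv m hm]; ring
  set H : ℤ → k := Dinv g₂ with hHdef
  have hH1 : ∀ n, H (n + 1) = H n + g₂ n := Dinv_succ g₂ N₀ hg₂
  have hHv : ∀ n ≥ N₀, H n = 0 := Dinv_vanish g₂ N₀ hg₂
  set g₃ : ℤ → k := Mul (fun n => -(Lam (fun m => G m * (q m)⁻¹) n)) f with hg₃def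
  have hg₃eq : ∀ n, g₃ n = -(G (n + 1) * (q (n + 1))⁻¹) * f n := by
    intro n; simp [hg₃def, Mul, Lam]
  have hg₃ : ∀ m ≥ N₀, g₃ m = 0 := by
    intro m hm; rw [hg₃eq, hN₀ m hm]; ring
  set D2 : ℤ → k := Dinv g₃ with hD2def
  have hD1 : ∀ n, D2 (n + 1) = D2 n + g₃ n := Dinv_succ g₃ N₀ hg₃
  have hD2v : ∀ n ≥ N₀, D2 n = 0 := Dinv_vanish g₃ N₀ hg₃
  have hH : H = fun n => G n * F n + D2 n := by
    apply eq_of_dlt_eq _ _ N₀ hHv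
    · intro n hn
      rw [hFv n hn, hD2v n hn]; ring
    · intro n
      have h4 := hG n
      simp only [Dlt] at h4
      have hg₁n : g₁ n = (q (n + 1))⁻¹ * f n := by simp [hg₁def, Mul, Lam, pinv]
      rw [hH1 n, hF1 n, hD1 n, hg₂eq n, hg₃eq n, hg₁n]
      linear_combination -(F n) * h4
  funext n
  simp only [TD, Mul, Dlt, Lam, pinv, Pi.add_apply]
  have hHn := congrFun hH n
  have hHn1 := congrFun hH (n + 1)
  rw [hHn1, hHn, hF1 n, hD1 n]
  have hg₁n : g₁ n = (q (n + 1))⁻¹ * f n := by simp [hg₁def, Mul, Lam, pinv]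
  rw [hg₁n, hg₃eq n]
  ring

end CdKP
end
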